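/- Let λ, μ ∈ ℝ satisfy cos(λπ) < cos(μπ). Then the function k ↦ Θ(λK(k), k)/Θ(μK(k), k) is positive and strictly monotone increasing on the interval k ∈ (0,1). -/

import Mathlib

open Real

/-- Complete elliptic integral of the first kind. -/
noncomputable def EllK (k : ℝ) : ℝ :=
  ∫ θ in (0:ℝ)..(π/2), 1 / Real.sqrt (1 - k^2 * Real.sin θ ^ 2)

/-- Complete elliptic integral of the second kind. -/
noncomputable def EllE (k : ℝ) : ℝ :=
  ∫ θ in (0:ℝ)..(π/2), Real.sqrt (1 - k^2 * Real.sin θ ^ 2)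

/-- Complementary complete elliptic integral `K'(k) = K(√(1-k²))`. -/
noncomputable def EllK' (k : ℝ) : ℝ := EllK (Real.sqrt (1 - k^2))

/-- Complementary elliptic integral of the second kind `E'(k) = E(√(1-k²))`. -/
noncomputable def EllE' (k : ℝ) : ℝ := EllE (Real.sqrt (1 - k^2))

/-- The nome `q = exp(-π K'(k)/K(k))`. -/
noncomputable def nome (k : ℝ) : ℝ := Real.exp (-π * EllK' k / EllK k)

/-- Jacobi's theta function `Θ(u,k) = 1 + 2 ∑_{n≥1} (-1)^n q^{n²} cos(nπu/K)`. -/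
noncomputable def JTheta (u k : ℝ) : ℝ :=
  1 + 2 * ∑' n : ℕ, (-1 : ℝ)^(n+1) * nome k ^ ((n+1)^2) *
    Real.cos (((n:ℝ)+1) * π * u / EllK k)

/-- Jacobi's theta function `H(u,k) = 2 ∑_{n≥0} (-1)^n q^{(n+1/2)²} sin((2n+1)πu/(2K))`. -/
noncomputable def JH (u k : ℝ) : ℝ :=
  2 * ∑' n : ℕ, (-1 : ℝ)^n * nome k ^ ((((n:ℝ) + 1/2)^2)) *
    Real.sin ((2*(n:ℝ)+1) * π * u / (2 * EllK k))

/-- Jacobi's theta function `H₁(u,k) = 2 ∑_{n≥0} q^{(n+1/2)²} cos((2n+1)πu/(2K))`. -/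
noncomputable def JH1 (u k : ℝ) : ℝ :=
  2 * ∑' n : ℕ, nome k ^ ((((n:ℝ) + 1/2)^2)) *
    Real.cos ((2*(n:ℝ)+1) * π * u / (2 * EllK k))

/-- Jacobi's theta function `Θ₁(u,k) = 1 + 2 ∑_{n≥1} q^{n²} cos(nπu/K)`. -/
noncomputable def JTheta1 (u k : ℝ) : ℝ :=
  1 + 2 * ∑' n : ℕ, nome k ^ ((n+1)^2) * Real.cos (((n:ℝ)+1) * π * u / EllK k)

/-- Jacobi's zeta function `zn(u,k) = Θ_u(u,k)/Θ(u,k)`. -/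
noncomputable def zn (u k : ℝ) : ℝ := deriv (fun v => JTheta v k) u / JTheta u k

/-- Jacobi's elliptic sine `sn(u,k) = H(u,k)/(√k Θ(u,k))`. -/
noncomputable def sn (u k : ℝ) : ℝ := JH u k / (Real.sqrt k * JTheta u k)

/-- Jacobi's elliptic cosine `cn(u,k) = √(k'/k) H₁(u,k)/Θ(u,k)`. -/
noncomputable def cn (u k : ℝ) : ℝ :=
  Real.sqrt (Real.sqrt (1 - k^2) / k) * JH1 u k / JTheta u k

/-- Jacobi's delta amplitude `dn(u,k) = √(k') Θ₁(u,k)/Θ(u,k)`. -/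
noncomputable def dn (u k : ℝ) : ℝ :=
  Real.sqrt (Real.sqrt (1 - k^2)) * JTheta1 u k / JTheta u k

/-!
With `q` the nome, Jacobi's triple product gives `Θ(λK, k) = (q²; q²)_∞ ∏_{j ≥ 0} A_j(q, cos λπ)`
where `A_j(q, x) = 1 - 2 q^{2j+1} x + q^{4j+2}`, so the ratio is
`exp ∑_j (log A_j(q, cos λπ) - log A_j(q, cos μπ))` with every term strictly increasing in `q`
when `cos λπ < cos μπ`; and `q` increases strictly with `k`, because `K` increases and `K'`
decreases. The triple product is the limit `N → ∞` of its finite form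
`∏_{j<N} (1 + z q^{2j+1}) (1 + z⁻¹ q^{2j+1}) = ∑_{|m| ≤ N} [2N, N+m]_{q²} q^{m²} z^m`,
proved by induction on `N`; the limit is taken termwise by dominated convergence, using
`[2N, N+m]_{q²} → 1 / (q²; q²)_∞`.
-/

open Filter Topology

noncomputable def qPochhammer (Q : ℝ) (n : ℕ) : ℝ :=
  ∏ i ∈ Finset.range n, (1 - Q ^ (i + 1))

noncomputable def qPochhammerInf (Q : ℝ) : ℝ := ∏' i : ℕ, (1 - Q ^ (i + 1))

section QPochhammer

variable {Q : ℝ} (hQ0 : 0 ≤ Q) (hQ1 : Q < 1)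
include hQ0 hQ1

lemma one_sub_pow_succ_pos (i : ℕ) : 0 < 1 - Q ^ (i + 1) :=
  sub_pos.2 (pow_lt_one₀ hQ0 hQ1 i.succ_ne_zero)

lemma qPochhammer_pos (n : ℕ) : 0 < qPochhammer Q n :=
  Finset.prod_pos fun i _ ↦ one_sub_pow_succ_pos hQ0 hQ1 i

omit hQ0 hQ1 in
@[simp]
lemma qPochhammer_zero : qPochhammer Q 0 = 1 :=
  Finset.prod_range_zero _

omit hQ0 hQ1 in
lemma qPochhammer_succ (n : ℕ) : qPochhammer Q (n + 1) = qPochhammer Q n * (1 - Q ^ (n + 1)) :=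
  Finset.prod_range_succ _ n

lemma qPochhammer_antitone : Antitone (qPochhammer Q) :=
  antitone_nat_of_succ_le fun n ↦ by
    rw [qPochhammer_succ]
    exact mul_le_of_le_one_right (qPochhammer_pos hQ0 hQ1 n).le
      (sub_le_self _ (pow_nonneg hQ0 _))

lemma qPochhammer_le_one (n : ℕ) : qPochhammer Q n ≤ 1 :=
  qPochhammer_antitone hQ0 hQ1 (Nat.zero_le n)

lemma summable_log_one_sub_pow_succ : Summable fun i : ℕ ↦ Real.log (1 - Q ^ (i + 1)) := by
  have hgeom : Summable fun i : ℕ ↦ -Q ^ (i + 1) :=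
    ((summable_geometric_of_lt_one hQ0 hQ1).mul_left Q).neg.congr fun i ↦ by ring
  simpa [sub_eq_add_neg] using Real.summable_log_one_add_of_summable hgeom

lemma hasProd_one_sub_pow_succ :
    HasProd (fun i : ℕ ↦ 1 - Q ^ (i + 1))
      (Real.exp (∑' i : ℕ, Real.log (1 - Q ^ (i + 1)))) :=
  Real.hasProd_of_hasSum_log (one_sub_pow_succ_pos hQ0 hQ1)
    (summable_log_one_sub_pow_succ hQ0 hQ1).hasSum

lemma qPochhammerInf_pos : 0 < qPochhammerInf Q := by
  rw [qPochhammerInf, (hasProd_one_sub_pow_succ hQ0 hQ1).tprod_eq]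
  exact Real.exp_pos _

lemma tendsto_qPochhammer : Tendsto (qPochhammer Q) atTop (𝓝 (qPochhammerInf Q)) := by
  rw [qPochhammerInf, (hasProd_one_sub_pow_succ hQ0 hQ1).tprod_eq]
  exact (hasProd_one_sub_pow_succ hQ0 hQ1).tendsto_prod_nat

lemma qPochhammerInf_le_qPochhammer (n : ℕ) : qPochhammerInf Q ≤ qPochhammer Q n :=
  (qPochhammer_antitone hQ0 hQ1).le_of_tendsto (tendsto_qPochhammer hQ0 hQ1) n

end QPochhammer

/-- The Gaussian binomial coefficient `[2N, N + m]_Q`, extended by zero to `|m| > N`. -/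
noncomputable def centralQBinomial (Q : ℝ) (N : ℕ) (m : ℤ) : ℝ :=
  if m.natAbs ≤ N then
    qPochhammer Q (2 * N) / (qPochhammer Q (N + m).toNat * qPochhammer Q (N - m).toNat)
  else 0

section CentralQBinomial

variable {Q : ℝ} {N : ℕ} {m : ℤ}

lemma centralQBinomial_of_lt (hm : N < m.natAbs) : centralQBinomial Q N m = 0 :=
  if_neg (by omega)

lemma centralQBinomial_eq {p r : ℕ} (hp : (p : ℤ) = N + m) (hr : (r : ℤ) = N - m) :
    centralQBinomial Q N m = qPochhammer Q (2 * N) / (qPochhammer Q p * qPochhammer Q r) := by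
  rw [centralQBinomial, if_pos (by omega), show (N + m).toNat = p by omega,
    show (N - m).toNat = r by omega]

lemma centralQBinomial_neg : centralQBinomial Q N (-m) = centralQBinomial Q N m := by
  simp only [centralQBinomial, Int.natAbs_neg, sub_neg_eq_add, ← sub_eq_add_neg, mul_comm]

variable (hQ0 : 0 ≤ Q) (hQ1 : Q < 1)
include hQ0 hQ1

-- The factor `1 - Q ^ p` makes the right side vanish at `p = 0`, as the left side does.
lemma centralQBinomial_sub_one_eq {p r : ℕ} (hp : (p : ℤ) = N + m) (hr : (r : ℤ) = N - m) :
    centralQBinomial Q N (m - 1) = qPochhammer Q (2 * N) * ((1 - Q ^ p) * (1 - Q ^ (p + 1)))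
      / (qPochhammer Q (p + 1) * qPochhammer Q (r + 1)) := by
  rcases p with _ | p
  · rw [centralQBinomial_of_lt (by omega)]
    simp
  · rw [centralQBinomial_eq (p := p) (r := r + 1) (by omega) (by omega), qPochhammer_succ (p + 1),
      qPochhammer_succ p, qPochhammer_succ r]
    have := (one_sub_pow_succ_pos hQ0 hQ1 p).ne'
    have := (one_sub_pow_succ_pos hQ0 hQ1 (p + 1)).ne'
    have := (qPochhammer_pos hQ0 hQ1 p).ne'
    field_simp

lemma centralQBinomial_succ_of_natAbs_le (hm : m.natAbs ≤ N) :
    centralQBinomial Q (N + 1) m = centralQBinomial Q N m * (1 + Q ^ (2 * N + 1))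
      + centralQBinomial Q N (m - 1) * Q ^ (N + 1 - m)
      + centralQBinomial Q N (m + 1) * Q ^ (N + 1 + m) := by
  obtain ⟨p, hp⟩ : ∃ p : ℕ, (p : ℤ) = N + m := ⟨(N + m).toNat, by omega⟩
  obtain ⟨r, hr⟩ : ∃ r : ℕ, (r : ℤ) = N - m := ⟨(N - m).toNat, by omega⟩
  have := (one_sub_pow_succ_pos hQ0 hQ1 p).ne'
  have := (one_sub_pow_succ_pos hQ0 hQ1 r).ne'
  have := (qPochhammer_pos hQ0 hQ1 p).ne'
  have := (qPochhammer_pos hQ0 hQ1 r).ne'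
  have hreflect : centralQBinomial Q N (m + 1) = centralQBinomial Q N (-m - 1) := by
    rw [← centralQBinomial_neg]; congr 1; ring
  rw [centralQBinomial_eq (p := p + 1) (r := r + 1) (by push_cast; omega) (by push_cast; omega),
    centralQBinomial_eq hp hr, centralQBinomial_sub_one_eq hQ0 hQ1 hp hr, hreflect,
    centralQBinomial_sub_one_eq hQ0 hQ1 (p := r) (r := p) (by omega) (by omega),
    show (N + 1 - m : ℤ) = (r + 1 : ℕ) by omega,
    show (N + 1 + m : ℤ) = (p + 1 : ℕ) by omega,
    zpow_natCast, zpow_natCast, show 2 * (N + 1) = 2 * N + 1 + 1 by ring, qPochhammer_succ,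
    qPochhammer_succ, qPochhammer_succ p, qPochhammer_succ r, show 2 * N + 1 = p + r + 1 by omega]
  field_simp
  ring

lemma centralQBinomial_succ (m : ℤ) :
    centralQBinomial Q (N + 1) m = centralQBinomial Q N m * (1 + Q ^ (2 * N + 1))
      + centralQBinomial Q N (m - 1) * Q ^ (N + 1 - m)
      + centralQBinomial Q N (m + 1) * Q ^ (N + 1 + m) := by
  by_cases hm : m.natAbs ≤ N
  · exact centralQBinomial_succ_of_natAbs_le hQ0 hQ1 hm
  have hP := fun n ↦ (qPochhammer_pos hQ0 hQ1 n).ne'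
  rcases (by omega : m = N + 1 ∨ m = -(N + 1) ∨ N + 1 < m.natAbs) with rfl | rfl | hm'
  · rw [centralQBinomial_of_lt (N := N) (m := N + 1) (by omega),
      centralQBinomial_of_lt (N := N) (m := N + 1 + 1) (by omega),
      centralQBinomial_eq (N := N + 1) (p := 2 * (N + 1)) (r := 0) (by push_cast; ring)
        (by simp),
      centralQBinomial_eq (N := N) (p := 2 * N) (r := 0) (by push_cast; ring) (by simp)]
    simp [hP]
  · rw [centralQBinomial_of_lt (N := N) (m := -(N + 1)) (by omega),
      centralQBinomial_of_lt (N := N) (m := -(N + 1) - 1) (by omega),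
      centralQBinomial_eq (N := N + 1) (p := 0) (r := 2 * (N + 1)) (by simp)
        (by push_cast; ring),
      centralQBinomial_eq (N := N) (p := 0) (r := 2 * N) (by simp) (by push_cast; ring)]
    simp [hP]
  · simp [centralQBinomial_of_lt, hm', show N < (m - 1).natAbs by omega,
      show N < (m + 1).natAbs by omega, show N < m.natAbs by omega]

lemma centralQBinomial_nonneg (N : ℕ) (m : ℤ) : 0 ≤ centralQBinomial Q N m := by
  have hP := qPochhammer_pos hQ0 hQ1
  unfold centralQBinomial
  split_ifs
  · exact div_nonneg (hP _).le (mul_pos (hP _) (hP _)).le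
  · exact le_rfl

lemma centralQBinomial_le (N : ℕ) (m : ℤ) :
    centralQBinomial Q N m ≤ (qPochhammerInf Q)⁻¹ ^ 2 := by
  have hP := qPochhammer_pos hQ0 hQ1
  have hInf := qPochhammerInf_pos hQ0 hQ1
  have hle := qPochhammerInf_le_qPochhammer hQ0 hQ1
  unfold centralQBinomial
  split_ifs
  · calc _ ≤ 1 / (qPochhammerInf Q * qPochhammerInf Q) :=
          div_le_div₀ zero_le_one (qPochhammer_le_one hQ0 hQ1 _) (by positivity)
            (mul_le_mul (hle _) (hle _) hInf.le (hP _).le)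
      _ = (qPochhammerInf Q)⁻¹ ^ 2 := by field_simp
  · positivity

lemma tendsto_centralQBinomial (m : ℤ) :
    Tendsto (fun N ↦ centralQBinomial Q N m) atTop (𝓝 (qPochhammerInf Q)⁻¹) := by
  have hInf := qPochhammerInf_pos hQ0 hQ1
  have hlim := tendsto_qPochhammer hQ0 hQ1
  have h2N : Tendsto (fun N : ℕ ↦ qPochhammer Q (2 * N)) atTop (𝓝 (qPochhammerInf Q)) :=
    hlim.comp (tendsto_id.const_mul_atTop' two_pos)
  have hshift (s : ℤ) : Tendsto (fun N : ℕ ↦ qPochhammer Q (N + s).toNat) atTop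
      (𝓝 (qPochhammerInf Q)) :=
    hlim.comp (tendsto_atTop_atTop.2 fun b ↦ ⟨b + s.natAbs, fun N hN ↦ by omega⟩)
  have := h2N.div ((hshift m).mul (hshift (-m))) (by positivity)
  rw [show qPochhammerInf Q / (qPochhammerInf Q * qPochhammerInf Q) = (qPochhammerInf Q)⁻¹ by
    field_simp] at this
  refine this.congr' ?_
  filter_upwards [eventually_ge_atTop m.natAbs] with N hN
  simp [centralQBinomial, hN, sub_eq_add_neg]

end CentralQBinomial

/-- The coefficient of `z ^ m` in `∏_{j<N} (1 + z q^(2j+1)) (1 + z⁻¹ q^(2j+1))`. -/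
noncomputable def tripleCoeff (q : ℝ) (N : ℕ) (m : ℤ) : ℝ :=
  centralQBinomial (q ^ 2) N m * q ^ (m ^ 2)

section FiniteTripleProduct

variable {q : ℝ}

lemma tripleCoeff_of_lt {N : ℕ} {m : ℤ} (hm : N < m.natAbs) : tripleCoeff q N m = 0 := by
  rw [tripleCoeff, centralQBinomial_of_lt hm, zero_mul]

lemma summable_tripleCoeff_mul_zpow (N : ℕ) (c : ℤ) (z : ℂ) :
    Summable fun m : ℤ ↦ (tripleCoeff q N (m + c) : ℂ) * z ^ m :=
  summable_of_ne_finset_zero (s := Finset.Icc (-N - c) (N - c)) fun m hm ↦ by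
    rw [tripleCoeff_of_lt (by simp only [Finset.mem_Icc, not_and, not_le] at hm; omega),
      Complex.ofReal_zero, zero_mul]

lemma tsum_tripleCoeff_add_mul_zpow {z : ℂ} (hz : z ≠ 0) (N : ℕ) (c : ℤ) :
    ∑' m : ℤ, (tripleCoeff q N (m + c) : ℂ) * z ^ m
      = z ^ (-c) * ∑' m : ℤ, (tripleCoeff q N m : ℂ) * z ^ m := by
  calc ∑' m : ℤ, (tripleCoeff q N (m + c) : ℂ) * z ^ m
      = ∑' m : ℤ, (tripleCoeff q N (m - c + c) : ℂ) * z ^ (m - c) :=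
        ((Equiv.subRight c).tsum_eq fun m ↦ (tripleCoeff q N (m + c) : ℂ) * z ^ m).symm
    _ = ∑' m : ℤ, z ^ (-c) * ((tripleCoeff q N m : ℂ) * z ^ m) := by
        refine tsum_congr fun m ↦ ?_
        rw [sub_add_cancel, zpow_sub₀ hz, zpow_neg]
        ring
    _ = _ := tsum_mul_left

variable (hq0 : 0 < q) (hq1 : q < 1)
include hq0 hq1

lemma tripleCoeff_succ (N : ℕ) (m : ℤ) :
    tripleCoeff q (N + 1) m = tripleCoeff q N m * (1 + q ^ (4 * N + 2))
      + (tripleCoeff q N (m - 1) + tripleCoeff q N (m + 1)) * q ^ (2 * N + 1) := by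
  have hexp (a b : ℤ) (h : 2 * a + m ^ 2 = b + (2 * N + 1)) :
      (q ^ 2) ^ a * q ^ (m ^ 2) = q ^ b * q ^ (2 * N + 1) := by
    rw [← zpow_natCast q 2, ← zpow_mul, ← zpow_natCast q (2 * N + 1), ← zpow_add₀ hq0.ne',
      ← zpow_add₀ hq0.ne']
    push_cast
    rw [h]
  simp only [tripleCoeff, centralQBinomial_succ (sq_nonneg q) (by nlinarith) m]
  linear_combination centralQBinomial (q ^ 2) N (m - 1) * hexp (N + 1 - m) ((m - 1) ^ 2) (by ring)
    + centralQBinomial (q ^ 2) N (m + 1) * hexp (N + 1 + m) ((m + 1) ^ 2) (by ring)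

theorem finite_jacobi_triple_product {z : ℂ} (hz : z ≠ 0) (N : ℕ) :
    ∏ j ∈ Finset.range N, (1 + z * q ^ (2 * j + 1)) * (1 + z⁻¹ * q ^ (2 * j + 1))
      = ∑' m : ℤ, (tripleCoeff q N m : ℂ) * z ^ m := by
  induction N with
  | zero =>
    rw [Finset.prod_range_zero, tsum_eq_single 0 fun m hm ↦ by
      rw [tripleCoeff_of_lt (by omega), Complex.ofReal_zero, zero_mul]]
    simp [tripleCoeff, centralQBinomial]
  | succ N ih =>
    set S := ∑' m : ℤ, (tripleCoeff q N m : ℂ) * z ^ m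
    have hs (c : ℤ) := summable_tripleCoeff_mul_zpow (q := q) N c z
    have hshift (c : ℤ) := tsum_tripleCoeff_add_mul_zpow (q := q) hz N c
    set t : ℂ := (q : ℂ) ^ (2 * N + 1)
    rw [Finset.prod_range_succ]
    calc (∏ j ∈ Finset.range N, (1 + z * q ^ (2 * j + 1)) * (1 + z⁻¹ * q ^ (2 * j + 1)))
          * ((1 + z * t) * (1 + z⁻¹ * t))
        = (1 + t ^ 2) * S + t * (z ^ (-(-1 : ℤ)) * S) + t * (z ^ (-1 : ℤ) * S) := by
          rw [ih, zpow_neg_one, neg_neg, zpow_one]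
          field_simp
          ring
      _ = ∑' m : ℤ, ((1 + t ^ 2) * ((tripleCoeff q N (m + 0) : ℂ) * z ^ m)
            + t * ((tripleCoeff q N (m + -1) : ℂ) * z ^ m)
            + t * ((tripleCoeff q N (m + 1) : ℂ) * z ^ m)) := by
          rw [(((hs 0).mul_left _).add ((hs (-1)).mul_left _)).tsum_add ((hs 1).mul_left _),
            ((hs 0).mul_left _).tsum_add ((hs (-1)).mul_left _), tsum_mul_left, tsum_mul_left,
            tsum_mul_left, hshift, hshift, hshift, neg_zero, zpow_zero, one_mul]
      _ = ∑' m : ℤ, (tripleCoeff q (N + 1) m : ℂ) * z ^ m := by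
          refine tsum_congr fun m ↦ ?_
          rw [tripleCoeff_succ hq0 hq1, add_zero, ← sub_eq_add_neg]
          push_cast
          ring

end FiniteTripleProduct

lemma summable_zpow_sq {q : ℝ} (hq0 : 0 ≤ q) (hq1 : q < 1) :
    Summable fun m : ℤ ↦ q ^ (m ^ 2) := by
  have hnat : Summable fun n : ℕ ↦ q ^ (n ^ 2) :=
    (summable_geometric_of_lt_one hq0 hq1).of_nonneg_of_le (fun n ↦ by positivity)
      fun n ↦ pow_le_pow_of_le_one hq0 hq1.le (Nat.le_self_pow two_ne_zero n)
  refine .of_nat_of_neg (hnat.congr fun n ↦ ?_) (hnat.congr fun n ↦ ?_) <;>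
    rw [← zpow_natCast] <;> push_cast <;> ring_nf

section TripleProduct

variable {q : ℝ} (hq0 : 0 < q) (hq1 : q < 1)
include hq0 hq1

lemma tendsto_tsum_tripleCoeff_mul_zpow {z : ℂ} (hz : ‖z‖ = 1) :
    Tendsto (fun N ↦ ∑' m : ℤ, (tripleCoeff q N m : ℂ) * z ^ m) atTop
      (𝓝 (∑' m : ℤ, (((qPochhammerInf (q ^ 2))⁻¹ * q ^ (m ^ 2) : ℝ) : ℂ) * z ^ m)) := by
  have hQ0 : 0 ≤ q ^ 2 := sq_nonneg q
  have hQ1 : q ^ 2 < 1 := by nlinarith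
  refine tendsto_tsum_of_dominated_convergence
    (bound := fun m : ℤ ↦ (qPochhammerInf (q ^ 2))⁻¹ ^ 2 * q ^ (m ^ 2))
    ((summable_zpow_sq hq0.le hq1).mul_left _) (fun m ↦ ?_) (.of_forall fun N m ↦ ?_)
  · exact ((Complex.continuous_ofReal.tendsto _).comp
      ((tendsto_centralQBinomial hQ0 hQ1 m).mul_const _)).mul_const _
  · rw [norm_mul, norm_zpow, hz, one_zpow, mul_one, Complex.norm_real, Real.norm_eq_abs,
      tripleCoeff, abs_of_nonneg (by have := centralQBinomial_nonneg hQ0 hQ1 N m; positivity)]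
    exact mul_le_mul_of_nonneg_right (centralQBinomial_le hQ0 hQ1 N m) (by positivity)

theorem jacobi_triple_product {z : ℂ} (hz : ‖z‖ = 1) :
    Tendsto
      (fun N ↦ ∏ j ∈ Finset.range N, (1 + z * q ^ (2 * j + 1)) * (1 + z⁻¹ * q ^ (2 * j + 1)))
      atTop (𝓝 ((qPochhammerInf (q ^ 2) : ℂ)⁻¹ * ∑' m : ℤ, (q : ℂ) ^ (m ^ 2) * z ^ m)) := by
  have hz0 : z ≠ 0 := norm_ne_zero_iff.1 (hz ▸ one_ne_zero)
  simp_rw [finite_jacobi_triple_product hq0 hq1 hz0, ← tsum_mul_left, ← mul_assoc]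
  exact_mod_cast tendsto_tsum_tripleCoeff_mul_zpow hq0 hq1 hz

end TripleProduct

/-- Jacobi's `ϑ₄(θ/2, q)`, so that `JTheta u k = thetaSeries (nome k) (π u / K(k))`. -/
noncomputable def thetaSeries (q θ : ℝ) : ℝ :=
  1 + 2 * ∑' n : ℕ, (-1 : ℝ) ^ (n + 1) * q ^ ((n + 1) ^ 2) * Real.cos (((n : ℝ) + 1) * θ)

/-- The `j`-th factor of the product expansion of `thetaSeries q θ`, at `x = cos θ`. -/
noncomputable def jacobiFactor (q x : ℝ) (j : ℕ) : ℝ :=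
  1 - 2 * q ^ (2 * j + 1) * x + (q ^ (2 * j + 1)) ^ 2

section JacobiFactor

variable {q x : ℝ} (hq0 : 0 ≤ q) (hq1 : q < 1)
include hq0 hq1

lemma jacobiFactor_pos (hx : x ≤ 1) (j : ℕ) : 0 < jacobiFactor q x j := by
  have ht0 : 0 ≤ q ^ (2 * j + 1) := pow_nonneg hq0 _
  have ht1 : q ^ (2 * j + 1) < 1 := pow_lt_one₀ hq0 hq1 (by omega)
  unfold jacobiFactor
  nlinarith [mul_nonneg ht0 (sub_nonneg.2 hx)]

lemma summable_log_jacobiFactor (x : ℝ) : Summable fun j ↦ Real.log (jacobiFactor q x j) := by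
  have hgeom : Summable fun j : ℕ ↦ q ^ (2 * j + 1) :=
    ((summable_geometric_of_lt_one (sq_nonneg q) (by nlinarith)).mul_left q).congr fun j ↦ by ring
  have hsq : Summable fun j : ℕ ↦ (q ^ (2 * j + 1)) ^ 2 :=
    hgeom.of_nonneg_of_le (fun j ↦ by positivity)
      fun j ↦ pow_le_of_le_one (pow_nonneg hq0 _) (pow_le_one₀ hq0 hq1.le) two_ne_zero
  have := Real.summable_log_one_add_of_summable ((hgeom.mul_left (-2 * x)).add hsq)
  refine this.congr fun j ↦ ?_
  congr 1
  unfold jacobiFactor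
  ring

lemma tendsto_prod_jacobiFactor (hx : x ≤ 1) :
    Tendsto (fun N ↦ ∏ j ∈ Finset.range N, jacobiFactor q x j) atTop
      (𝓝 (Real.exp (∑' j, Real.log (jacobiFactor q x j)))) :=
  (Real.hasProd_of_hasSum_log (jacobiFactor_pos hq0 hq1 hx)
    (summable_log_jacobiFactor hq0 hq1 x).hasSum).tendsto_prod_nat

end JacobiFactor

lemma one_add_mul_one_add_inv_mul_neg_exp (θ t : ℝ) :
    (1 + -Complex.exp (θ * Complex.I) * t) * (1 + (-Complex.exp (θ * Complex.I))⁻¹ * t)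
      = ((1 - 2 * t * Real.cos θ + t ^ 2 : ℝ) : ℂ) := by
  rw [inv_neg, ← Complex.exp_neg, ← neg_mul, Complex.exp_mul_I, Complex.exp_mul_I,
    Complex.cos_neg, Complex.sin_neg]
  push_cast
  linear_combination (t : ℂ) ^ 2 * Complex.sin_sq_add_cos_sq (θ : ℂ)
    - (t : ℂ) ^ 2 * Complex.sin θ ^ 2 * Complex.I_sq

section RealTripleProduct

variable {q : ℝ} (hq0 : 0 < q) (hq1 : q < 1)
include hq0 hq1

lemma tsum_zpow_sq_mul_neg_exp (θ : ℝ) :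
    ∑' m : ℤ, (q : ℂ) ^ (m ^ 2) * (-Complex.exp (θ * Complex.I)) ^ m = thetaSeries q θ := by
  set g : ℤ → ℂ := fun m ↦ (q : ℂ) ^ (m ^ 2) * (-Complex.exp (θ * Complex.I)) ^ m
  have hg : Summable g := by
    refine .of_norm ((summable_zpow_sq hq0.le hq1).congr fun m ↦ ?_)
    simp [g, norm_zpow, Complex.norm_exp_ofReal_mul_I, abs_of_pos hq0]
  have hexp (m : ℤ) : (-Complex.exp (θ * Complex.I)) ^ m
      = (-1) ^ m * (Real.cos (m * θ) + Real.sin (m * θ) * Complex.I) := by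
    rw [neg_eq_neg_one_mul, mul_zpow, ← Complex.exp_int_mul,
      show (m : ℂ) * (θ * Complex.I) = ((m * θ : ℝ) : ℂ) * Complex.I by push_cast; ring,
      Complex.exp_mul_I, Complex.ofReal_cos, Complex.ofReal_sin]
  have hpair (n : ℕ) :
      g n + g (-n) = ((2 * ((-1) ^ n * q ^ (n ^ 2) * Real.cos (n * θ)) : ℝ) : ℂ) := by
    simp only [g, hexp, neg_sq, zpow_neg, Int.cast_neg, Int.cast_natCast, neg_mul, Real.cos_neg,
      Real.sin_neg, ← Nat.cast_pow, zpow_natCast]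
    push_cast
    rw [← inv_pow, inv_neg, inv_one]
    ring
  set a : ℕ → ℝ := fun n ↦ 2 * ((-1) ^ n * q ^ (n ^ 2) * Real.cos (n * θ))
  have hsum := hg.hasSum.nat_add_neg
  simp_rw [hpair] at hsum
  have ha : Summable a := Complex.summable_ofReal.1 hsum.summable
  have hg0 : g 0 = 1 := by simp [g]
  have htheta : ∑' n, a n = 1 + thetaSeries q θ := by
    rw [ha.tsum_eq_zero_add, thetaSeries, tsum_mul_left]
    simp only [a, pow_zero, zero_pow two_ne_zero, mul_one, CharP.cast_eq_zero, zero_mul,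
      Real.cos_zero, Nat.cast_add, Nat.cast_one]
    ring
  rw [← add_left_inj (g 0), ← hsum.tsum_eq, ← Complex.ofReal_tsum, htheta, hg0]
  push_cast
  ring

theorem thetaSeries_eq_mul_exp_tsum_log (θ : ℝ) :
    thetaSeries q θ
      = qPochhammerInf (q ^ 2) * Real.exp (∑' j, Real.log (jacobiFactor q (Real.cos θ) j)) := by
  have hz : ‖-Complex.exp (θ * Complex.I)‖ = 1 := by
    rw [norm_neg, Complex.norm_exp_ofReal_mul_I]
  have hfactor (j : ℕ) : (1 + -Complex.exp (θ * Complex.I) * (q : ℂ) ^ (2 * j + 1))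
      * (1 + (-Complex.exp (θ * Complex.I))⁻¹ * (q : ℂ) ^ (2 * j + 1))
      = (jacobiFactor q (Real.cos θ) j : ℂ) := by
    exact_mod_cast one_add_mul_one_add_inv_mul_neg_exp θ (q ^ (2 * j + 1))
  have hprod := jacobi_triple_product hq0 hq1 hz
  simp_rw [hfactor, tsum_zpow_sq_mul_neg_exp hq0 hq1, ← Complex.ofReal_prod] at hprod
  have hlim := (Complex.continuous_ofReal.tendsto _).comp
    (tendsto_prod_jacobiFactor hq0.le hq1 (Real.cos_le_one θ))
  have hP := (qPochhammerInf_pos (sq_nonneg q) (by nlinarith)).ne'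
  have := tendsto_nhds_unique hprod hlim
  rw [← Complex.ofReal_inv, ← Complex.ofReal_mul, Complex.ofReal_inj] at this
  rw [← this, mul_inv_cancel_left₀ hP]

end RealTripleProduct

lemma thetaSeries_div_thetaSeries {q : ℝ} (hq0 : 0 < q) (hq1 : q < 1) (θ₁ θ₂ : ℝ) :
    thetaSeries q θ₁ / thetaSeries q θ₂ = Real.exp (∑' j, (Real.log (jacobiFactor q (Real.cos θ₁) j)
      - Real.log (jacobiFactor q (Real.cos θ₂) j))) := by
  rw [thetaSeries_eq_mul_exp_tsum_log hq0 hq1, thetaSeries_eq_mul_exp_tsum_log hq0 hq1,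
    mul_div_mul_left _ _ (qPochhammerInf_pos (sq_nonneg q) (by nlinarith)).ne', ← Real.exp_sub,
    (summable_log_jacobiFactor hq0.le hq1 _).tsum_sub (summable_log_jacobiFactor hq0.le hq1 _)]

section Monotonicity

variable {q₁ q₂ x y : ℝ} (hq₁ : 0 ≤ q₁) (hq : q₁ < q₂) (hq₂ : q₂ < 1) (hxy : x < y)
include hq₁ hq hq₂ hxy

lemma jacobiFactor_mul_lt_mul (j : ℕ) :
    jacobiFactor q₁ x j * jacobiFactor q₂ y j
      < jacobiFactor q₂ x j * jacobiFactor q₁ y j := by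
  have ht : q₁ ^ (2 * j + 1) < q₂ ^ (2 * j + 1) := pow_lt_pow_left₀ hq hq₁ (by omega)
  have ht₁ : 0 ≤ q₁ ^ (2 * j + 1) := pow_nonneg hq₁ _
  have ht₂ : q₂ ^ (2 * j + 1) < 1 := pow_lt_one₀ (hq₁.trans hq.le) hq₂ (by omega)
  have hprod : q₁ ^ (2 * j + 1) * q₂ ^ (2 * j + 1) < 1 := by nlinarith
  -- the two sides differ by `2 (y - x) (t₂ - t₁) (1 - t₁ t₂)`, where `tᵢ = qᵢ ^ (2j+1)`
  unfold jacobiFactor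
  nlinarith [mul_pos (mul_pos (sub_pos.2 hxy) (sub_pos.2 ht)) (sub_pos.2 hprod)]

lemma log_jacobiFactor_sub_lt (hy : y ≤ 1) (j : ℕ) :
    Real.log (jacobiFactor q₁ x j) - Real.log (jacobiFactor q₁ y j)
      < Real.log (jacobiFactor q₂ x j) - Real.log (jacobiFactor q₂ y j) := by
  have hq₁' : q₁ < 1 := hq.trans hq₂
  have hq₂' : 0 ≤ q₂ := hq₁.trans hq.le
  have hx : x ≤ 1 := hxy.le.trans hy
  have h₁x := jacobiFactor_pos hq₁ hq₁' hx j
  have h₁y := jacobiFactor_pos hq₁ hq₁' hy j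
  have h₂x := jacobiFactor_pos hq₂' hq₂ hx j
  have h₂y := jacobiFactor_pos hq₂' hq₂ hy j
  have h := Real.log_lt_log (mul_pos h₁x h₂y) (jacobiFactor_mul_lt_mul hq₁ hq hq₂ hxy j)
  rw [Real.log_mul h₁x.ne' h₂y.ne', Real.log_mul h₂x.ne' h₁y.ne'] at h
  linarith

end Monotonicity

lemma strictMonoOn_tsum_log_jacobiFactor_sub {x y : ℝ} (hxy : x < y) (hy : y ≤ 1) :
    StrictMonoOn
      (fun q ↦ ∑' j, (Real.log (jacobiFactor q x j) - Real.log (jacobiFactor q y j)))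
      (Set.Ico 0 1) := by
  intro q₁ ⟨hq₁, hq₁'⟩ q₂ ⟨hq₂, hq₂'⟩ hq
  have hsummable {q : ℝ} (h0 : 0 ≤ q) (h1 : q < 1) :=
    (summable_log_jacobiFactor h0 h1 x).sub (summable_log_jacobiFactor h0 h1 y)
  exact (hsummable hq₁ hq₁').tsum_lt_tsum (i := 0)
    (fun j ↦ (log_jacobiFactor_sub_lt hq₁ hq hq₂' hxy hy j).le)
    (log_jacobiFactor_sub_lt hq₁ hq hq₂' hxy hy 0) (hsummable hq₂ hq₂')

lemma one_sub_sq_mul_sin_sq_pos {k : ℝ} (hk : k ^ 2 < 1) (θ : ℝ) :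
    0 < 1 - k ^ 2 * Real.sin θ ^ 2 := by
  nlinarith [Real.sin_sq_le_one θ, sq_nonneg k]

lemma continuous_ellK_integrand {k : ℝ} (hk : k ^ 2 < 1) :
    Continuous fun θ ↦ 1 / Real.sqrt (1 - k ^ 2 * Real.sin θ ^ 2) :=
  continuous_const.div (by fun_prop) fun θ ↦
    (Real.sqrt_pos.2 (one_sub_sq_mul_sin_sq_pos hk θ)).ne'

lemma EllK_pos {k : ℝ} (hk : k ^ 2 < 1) : 0 < EllK k :=
  intervalIntegral.intervalIntegral_pos_of_pos
    ((continuous_ellK_integrand hk).intervalIntegrable _ _)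
    (fun θ ↦ one_div_pos.2 (Real.sqrt_pos.2 (one_sub_sq_mul_sin_sq_pos hk θ))) (by positivity)

lemma EllK_strictMonoOn : StrictMonoOn EllK (Set.Ico 0 1) := by
  intro a ⟨ha0, ha1⟩ b ⟨hb0, hb1⟩ hab
  have hab2 : a ^ 2 < b ^ 2 := by nlinarith
  have hb2 : b ^ 2 < 1 := by nlinarith
  have hle (θ : ℝ) : 1 / Real.sqrt (1 - a ^ 2 * Real.sin θ ^ 2)
      ≤ 1 / Real.sqrt (1 - b ^ 2 * Real.sin θ ^ 2) := by
    have := one_sub_sq_mul_sin_sq_pos hb2 θ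
    gcongr
  refine intervalIntegral.integral_lt_integral_of_continuousOn_of_le_of_exists_lt
    (by positivity) (continuous_ellK_integrand (hab2.trans hb2)).continuousOn
    (continuous_ellK_integrand hb2).continuousOn (fun θ _ ↦ hle θ)
    ⟨π / 2, ⟨by positivity, le_rfl⟩, ?_⟩
  have := one_sub_sq_mul_sin_sq_pos hb2 (π / 2)
  rw [Real.sin_pi_div_two] at this ⊢
  gcongr

lemma nome_mem_Ioo {k : ℝ} (hk : k ∈ Set.Ioo 0 1) : nome k ∈ Set.Ioo 0 1 := by
  have hK := EllK_pos (k := k) (by nlinarith [hk.1, hk.2])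
  have hK' : 0 < EllK' k := EllK_pos (by rw [Real.sq_sqrt] <;> nlinarith [hk.1, hk.2])
  refine ⟨Real.exp_pos _, Real.exp_lt_one_iff.2 ?_⟩
  rw [neg_mul, neg_div, neg_neg_iff_pos]
  positivity

lemma nome_strictMonoOn : StrictMonoOn nome (Set.Ioo 0 1) := by
  intro k₁ ⟨hk₁0, hk₁1⟩ k₂ ⟨hk₂0, hk₂1⟩ hk
  have hmem {k : ℝ} (h0 : 0 < k) (h1 : k < 1) : Real.sqrt (1 - k ^ 2) ∈ Set.Ico 0 1 :=
    ⟨Real.sqrt_nonneg _, by rw [Real.sqrt_lt' one_pos]; nlinarith⟩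
  have hK : EllK k₁ < EllK k₂ :=
    EllK_strictMonoOn ⟨hk₁0.le, hk₁1⟩ ⟨hk₂0.le, hk₂1⟩ hk
  have hK' : EllK' k₂ < EllK' k₁ := EllK_strictMonoOn (hmem hk₂0 hk₂1) (hmem hk₁0 hk₁1)
    (Real.sqrt_lt_sqrt (by nlinarith) (by nlinarith))
  have hK₁ : 0 < EllK k₁ := EllK_pos (by nlinarith)
  have hK'₂ : 0 < EllK' k₂ := EllK_pos (by rw [Real.sq_sqrt] <;> nlinarith)
  unfold nome
  rw [Real.exp_lt_exp, neg_mul, neg_mul, neg_div, neg_div, neg_lt_neg_iff, mul_div_assoc,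
    mul_div_assoc]
  exact mul_lt_mul_of_pos_left (div_lt_div₀ hK' hK.le (hK'₂.trans hK').le hK₁) Real.pi_pos

lemma JTheta_mul_EllK {k : ℝ} (hK : EllK k ≠ 0) (l : ℝ) :
    JTheta (l * EllK k) k = thetaSeries (nome k) (l * π) := by
  unfold JTheta thetaSeries
  congr 3 with n
  field_simp

theorem stmt_1 (lam mu : ℝ) (h : Real.cos (lam * π) < Real.cos (mu * π)) :
    (∀ k ∈ Set.Ioo (0:ℝ) 1,
      0 < JTheta (lam * EllK k) k / JTheta (mu * EllK k) k) ∧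
    StrictMonoOn (fun k => JTheta (lam * EllK k) k / JTheta (mu * EllK k) k)
      (Set.Ioo (0:ℝ) 1) := by
  have hratio : ∀ k ∈ Set.Ioo (0 : ℝ) 1, JTheta (lam * EllK k) k / JTheta (mu * EllK k) k
      = Real.exp (∑' j, (Real.log (jacobiFactor (nome k) (Real.cos (lam * π)) j)
          - Real.log (jacobiFactor (nome k) (Real.cos (mu * π)) j))) := by
    intro k hk
    have hK : EllK k ≠ 0 := (EllK_pos (by nlinarith [hk.1, hk.2])).ne'
    rw [JTheta_mul_EllK hK, JTheta_mul_EllK hK,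
      thetaSeries_div_thetaSeries (nome_mem_Ioo hk).1 (nome_mem_Ioo hk).2]
  refine ⟨fun k hk ↦ hratio k hk ▸ Real.exp_pos _, ?_⟩
  have hmono := (strictMonoOn_tsum_log_jacobiFactor_sub h (Real.cos_le_one _)).comp
    nome_strictMonoOn fun k hk ↦ Set.Ioo_subset_Ico_self (nome_mem_Ioo hk)
  exact (Real.exp_strictMono.comp_strictMonoOn hmono).congr fun k hk ↦ (hratio k hk).symm
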